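/- arXiv:1104.4175 — 7 statements merged into one kernel-verified Lean document; each statement's English description precedes it below -/
import Mathlib

section
/- For every x ∈ (0,1) and every n ≥ 0, F_n(x) = V_{2^n - 1}(x) and G_n(x) = V_{3^n - 1}(x). -/
/-! With `y = √(1 - x)` and `q = (1 - y) / (1 + y)`, the transform `r ↦ y (1 + r) / (1 - r)` sends
`q` to `1` and turns multiplication by `q` into the step of `V`, squaring into Newton's step and
cubing into Halley's step: writing `r = e^{-2t}`, the transform is `y coth t`, and these are the
addition, duplication and triplication formulas of `coth`. Hence `V n`, `F n`, `G n` are the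
transforms of `q ^ (n + 1)`, `q ^ 2 ^ n`, `q ^ 3 ^ n`. -/

noncomputable def V (x : ℝ) : ℕ → ℝ
  | 0 => 1
  | n + 1 => (1 - x + V x n) / (1 + V x n)

noncomputable def F (x : ℝ) : ℕ → ℝ
  | 0 => 1
  | n + 1 => (F x n + (1 - x) / F x n) / 2

noncomputable def G (x : ℝ) : ℕ → ℝ
  | 0 => 1
  | n + 1 => G x n * ((G x n) ^ 2 + 3 * (1 - x)) / (3 * (G x n) ^ 2 + 1 - x)

section Cayley

variable {K : Type*} [Field K] {y r : K}

def cayley (y r : K) : K := y * (1 + r) / (1 - r)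

lemma cayley_ratio_mul (hy : 1 + y ≠ 0) (hr : r ≠ 1) (hqr : (1 - y) / (1 + y) * r ≠ 1) :
    cayley y ((1 - y) / (1 + y) * r) = (y ^ 2 + cayley y r) / (1 + cayley y r) := by
  have h2 : 1 + y - (1 - y) * r ≠ 0 := by
    contrapose! hqr; field_simp; linear_combination -hqr
  have h3 : 1 - r + y * (1 + r) ≠ 0 := by
    contrapose! h2; linear_combination h2
  rw [cayley, cayley]
  field_simp
  ring

variable [CharZero K]

lemma cayley_ratio (hy : y ≠ 0) (hy' : 1 + y ≠ 0) : cayley y ((1 - y) / (1 + y)) = 1 := by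
  have : 1 - (1 - y) / (1 + y) = 2 * y / (1 + y) := by field_simp; ring
  rw [cayley, this]
  field_simp
  ring

lemma cayley_sq (hy : y ≠ 0) (hr : r ^ 2 ≠ 1) :
    cayley y (r ^ 2) = (cayley y r + y ^ 2 / cayley y r) / 2 := by
  have h1 : 1 - r ≠ 0 := by contrapose! hr; linear_combination (-1 - r) * hr
  have h2 : 1 + r ≠ 0 := by contrapose! hr; linear_combination (r - 1) * hr
  rw [cayley, cayley]
  field_simp
  ring

lemma cayley_cube (hy : y ≠ 0) (hr : r ^ 3 ≠ 1) :
    cayley y (r ^ 3) =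
      cayley y r * (cayley y r ^ 2 + 3 * y ^ 2) / (3 * cayley y r ^ 2 + y ^ 2) := by
  have h1 : 1 - r ≠ 0 := by contrapose! hr; linear_combination (-1 - r - r ^ 2) * hr
  have h2 : 1 + r + r ^ 2 ≠ 0 := by contrapose! hr; linear_combination (r - 1) * hr
  have num : cayley y r ^ 2 + 3 * y ^ 2 = 4 * y ^ 2 * (1 - r + r ^ 2) / (1 - r) ^ 2 := by
    rw [cayley]; field_simp; ring
  have den : 3 * cayley y r ^ 2 + y ^ 2 = 4 * y ^ 2 * (1 + r + r ^ 2) / (1 - r) ^ 2 := by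
    rw [cayley]; field_simp; ring
  rw [num, den, cayley, cayley]
  field_simp
  ring

end Cayley

section Iterations

variable {x y : ℝ}

lemma ratio_pow_ne_one (hy : 0 < y) {m : ℕ} (hm : m ≠ 0) : ((1 - y) / (1 + y)) ^ m ≠ 1 := by
  have hq : |(1 - y) / (1 + y)| < 1 := by
    rw [abs_div, abs_of_pos (show (0 : ℝ) < 1 + y by linarith), div_lt_one (by linarith), abs_lt]
    constructor <;> linarith
  intro h
  have := congrArg abs h
  rw [abs_pow, abs_one] at this
  exact (pow_lt_one₀ (abs_nonneg _) hq hm).ne this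

variable (hy : 0 < y) (hxy : 1 - x = y ^ 2)
include hy hxy

lemma V_eq_cayley (n : ℕ) : V x n = cayley y (((1 - y) / (1 + y)) ^ (n + 1)) := by
  induction n with
  | zero => rw [V, zero_add, pow_one, cayley_ratio hy.ne' (by linarith)]
  | succ n ih =>
    have hr : (1 - y) / (1 + y) * ((1 - y) / (1 + y)) ^ (n + 1) ≠ 1 := by
      rw [← pow_succ']; exact ratio_pow_ne_one hy (by positivity)
    rw [V, ih, hxy, ← cayley_ratio_mul (by linarith) (ratio_pow_ne_one hy (by positivity)) hr,
      ← pow_succ']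

lemma F_eq_cayley (n : ℕ) : F x n = cayley y (((1 - y) / (1 + y)) ^ 2 ^ n) := by
  induction n with
  | zero => rw [F, pow_zero, pow_one, cayley_ratio hy.ne' (by linarith)]
  | succ n ih =>
    have hr : (((1 - y) / (1 + y)) ^ 2 ^ n) ^ 2 ≠ 1 := by
      rw [← pow_mul]; exact ratio_pow_ne_one hy (by positivity)
    rw [F, ih, hxy, pow_succ 2 n, pow_mul, cayley_sq hy.ne' hr]

lemma G_eq_cayley (n : ℕ) : G x n = cayley y (((1 - y) / (1 + y)) ^ 3 ^ n) := by
  induction n with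
  | zero => rw [G, pow_zero, pow_one, cayley_ratio hy.ne' (by linarith)]
  | succ n ih =>
    have hr : (((1 - y) / (1 + y)) ^ 3 ^ n) ^ 3 ≠ 1 := by
      rw [← pow_mul]; exact ratio_pow_ne_one hy (by positivity)
    rw [G, ih, add_sub_assoc, hxy, pow_succ 3 n, pow_mul, cayley_cube hy.ne' hr]

end Iterations

theorem stmt6 (x : ℝ) (hx : x ∈ Set.Ioo (0 : ℝ) 1) (n : ℕ) :
    F x n = V x (2 ^ n - 1) ∧ G x n = V x (3 ^ n - 1) := by
  have hy : 0 < √(1 - x) := Real.sqrt_pos.mpr (by linarith [hx.2])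
  have hxy : 1 - x = √(1 - x) ^ 2 := (Real.sq_sqrt (by linarith [hx.2])).symm
  rw [F_eq_cayley hy hxy, G_eq_cayley hy hxy, V_eq_cayley hy hxy, V_eq_cayley hy hxy,
    Nat.sub_add_cancel Nat.one_le_two_pow, Nat.sub_add_cancel (Nat.one_le_pow _ _ three_pos)]
  exact ⟨rfl, rfl⟩
end

section
/- For every x ∈ (0,1) and every n ≥ 0, V_n(x) = √(1-x) · ((1+√(1-x))^{n+1} + (1-√(1-x))^{n+1}) / ((1+√(1-x))^{n+1} - (1-√(1-x))^{n+1}). -/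
theorem stmt7 (x : ℝ) (hx : x ∈ Set.Ioo (0 : ℝ) 1) (n : ℕ) :
    V x n = Real.sqrt (1 - x) *
      ((1 + Real.sqrt (1 - x)) ^ (n + 1) + (1 - Real.sqrt (1 - x)) ^ (n + 1)) /
      ((1 + Real.sqrt (1 - x)) ^ (n + 1) - (1 - Real.sqrt (1 - x)) ^ (n + 1)) := by
  obtain ⟨hx0, hx1⟩ := hx
  set s := Real.sqrt (1 - x) with hsdef
  have h1x : (0:ℝ) < 1 - x := by linarith
  have hs0 : 0 < s := Real.sqrt_pos.mpr h1x
  have hsq : s ^ 2 = 1 - x := Real.sq_sqrt h1x.le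
  have hs1 : s < 1 := by nlinarith
  induction n with
  | zero =>
    have h2s : (2:ℝ) * s ≠ 0 := by positivity
    show (1:ℝ) = _
    rw [pow_one, pow_one]
    rw [show (1 + s) - (1 - s) = 2 * s by ring, show (1 + s) + (1 - s) = 2 by ring]
    field_simp
  | succ n ih =>
    have hA : 0 < (1 + s) ^ (n + 1) := by positivity
    have hB : 0 < (1 - s) ^ (n + 1) := pow_pos (by linarith) _
    have hAB : (1 - s) ^ (n + 1) < (1 + s) ^ (n + 1) := by
      apply pow_lt_pow_left₀ (by linarith) (by linarith)
      exact Nat.succ_ne_zero n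
    have hden : (1 + s) ^ (n + 1) - (1 - s) ^ (n + 1) ≠ 0 := by linarith
    have hdenpos : 0 < (1 + s) ^ (n + 1) - (1 - s) ^ (n + 1) := by linarith
    have hV : 0 < V x n := by
      rw [ih]; positivity
    have h1V : (1 : ℝ) + V x n ≠ 0 := by linarith
    have hAB2 : (1 - s) ^ (n + 1 + 1) < (1 + s) ^ (n + 1 + 1) := by
      apply pow_lt_pow_left₀ (by linarith) (by linarith)
      exact Nat.succ_ne_zero _
    have hden2 : (1 + s) ^ (n + 1 + 1) - (1 - s) ^ (n + 1 + 1) ≠ 0 := by linarith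
    show (1 - x + V x n) / (1 + V x n) = _
    rw [ih, ← hsq]
    rw [ih] at h1V
    field_simp
    ring
end

section
/- For every x ∈ (0,1) and n ≥ 0, V_n(x) - √(1-x) = 2√(1-x) · x^{n+1} / ((1+√(1-x))^{2(n+1)} - x^{n+1}); in particular 0 < V_n(x) - √(1-x). -/
lemma key (x : ℝ) (hx : x ∈ Set.Ioo (0 : ℝ) 1) (n : ℕ) :
    V x n = Real.sqrt (1 - x) * (((1 + Real.sqrt (1 - x)) ^ 2) ^ (n + 1) + x ^ (n + 1)) /
      (((1 + Real.sqrt (1 - x)) ^ 2) ^ (n + 1) - x ^ (n + 1)) := by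
  obtain ⟨hx0, hx1⟩ := hx
  set s := Real.sqrt (1 - x) with hs
  have hs2 : s ^ 2 = 1 - x := Real.sq_sqrt (by linarith)
  have hs0 : 0 < s := Real.sqrt_pos.mpr (by linarith)
  have hab : x < (1 + s) ^ 2 := by nlinarith
  induction n with
  | zero =>
    simp only [V, zero_add, pow_one]
    rw [eq_div_iff (by nlinarith)]
    linear_combination (-(1:ℝ) - s) * hs2
  | succ n ih =>
    have hAB : x ^ (n + 1) < ((1 + s) ^ 2) ^ (n + 1) :=
      pow_lt_pow_left₀ hab (le_of_lt hx0) (by omega)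
    have hA0 : (0:ℝ) < x ^ (n + 1) := pow_pos hx0 _
    have hVpos : 0 < V x n := by
      rw [ih]
      exact div_pos (by positivity) (by linarith)
    show (1 - x + V x n) / (1 + V x n) = _
    rw [ih]
    have hxs : x = 1 - s ^ 2 := by linarith
    rw [hxs] at hAB hA0 ⊢
    rw [pow_succ ((1 + s) ^ 2) (n + 1), pow_succ (1 - s ^ 2) (n + 1)]
    generalize hA : ((1 + s) ^ 2) ^ (n + 1) = A at *
    generalize hB : ((1 - s ^ 2) : ℝ) ^ (n + 1) = B at *
    have hd1 : A - B ≠ 0 := by linarith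
    have hd2 : A * (1 + s) ^ 2 - B * (1 - s ^ 2) ≠ 0 := by nlinarith
    have hY : (0:ℝ) < 1 + s * (A + B) / (A - B) := by
      have : 0 < s * (A + B) / (A - B) := div_pos (by nlinarith) (by linarith)
      linarith
    rw [div_eq_div_iff (ne_of_gt hY) hd2]
    field_simp
    ring

theorem stmt8 (x : ℝ) (hx : x ∈ Set.Ioo (0 : ℝ) 1) (n : ℕ) :
    V x n - Real.sqrt (1 - x) =
      2 * Real.sqrt (1 - x) * x ^ (n + 1) /
        ((1 + Real.sqrt (1 - x)) ^ (2 * (n + 1)) - x ^ (n + 1)) ∧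
    0 < V x n - Real.sqrt (1 - x) := by
  have h := key x hx n
  obtain ⟨hx0, hx1⟩ := hx
  set s := Real.sqrt (1 - x) with hs
  have hs2 : s ^ 2 = 1 - x := Real.sq_sqrt (by linarith)
  have hs0 : 0 < s := Real.sqrt_pos.mpr (by linarith)
  have hab : x < (1 + s) ^ 2 := by nlinarith
  have hAB : x ^ (n + 1) < ((1 + s) ^ 2) ^ (n + 1) :=
    pow_lt_pow_left₀ hab (le_of_lt hx0) (by omega)
  have hA0 : (0:ℝ) < x ^ (n + 1) := pow_pos hx0 _
  have hpm : (1 + s) ^ (2 * (n + 1)) = ((1 + s) ^ 2) ^ (n + 1) := by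
    rw [pow_mul]
  rw [h, hpm]
  generalize hA : ((1 + s) ^ 2) ^ (n + 1) = A at *
  generalize hB : x ^ (n + 1) = B at *
  have hd1 : A - B ≠ 0 := by linarith
  have hmain : s * (A + B) / (A - B) - s = 2 * s * B / (A - B) := by
    field_simp
    ring
  refine ⟨hmain, ?_⟩
  rw [hmain]
  exact div_pos (by positivity) (by linarith)
end

section
/- For every x ∈ (0,1), the sequence V_n(x) defined by V_0 = 1, V_{n+1} = (1-x+V_n)/(1+V_n) converges to √(1-x) as n → ∞. -/
theorem stmt9 (x : ℝ) (hx : x ∈ Set.Ioo (0 : ℝ) 1) :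
    Filter.Tendsto (fun n => V x n) Filter.atTop (nhds (Real.sqrt (1 - x))) := by
  obtain ⟨hx0, hx1⟩ := hx
  set L := Real.sqrt (1 - x) with hLdef
  have h1x : (0:ℝ) < 1 - x := by linarith
  have hL2 : L ^ 2 = 1 - x := by
    rw [hLdef, sq, Real.mul_self_sqrt h1x.le]
  have hLpos : 0 < L := Real.sqrt_pos.mpr h1x
  have hL1 : L < 1 := by
    nlinarith [hL2, hLpos]
  -- V n ≥ L for all n
  have hge : ∀ n, L ≤ V x n := by
    intro n
    induction n with
    | zero => simpa [V] using hL1.le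
    | succ n ih =>
      have hden : 0 < 1 + V x n := by linarith
      rw [V, le_div_iff₀ hden]
      nlinarith [hL2]
  have key : ∀ n, V x (n + 1) - L = (1 - L) / (1 + V x n) * (V x n - L) := by
    intro n
    have hden : 0 < 1 + V x n := by linarith [hge n]
    rw [V]
    field_simp
    nlinarith [hL2]
  set c := (1 - L) / (1 + L) with hcdef
  have hc0 : 0 ≤ c := div_nonneg (by linarith) (by linarith)
  have hc1 : c < 1 := by
    rw [hcdef, div_lt_one (by linarith)]; linarith
  have bound : ∀ n, V x n - L ≤ c ^ n * (1 - L) := by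
    intro n
    induction n with
    | zero => simp [V]
    | succ n ih =>
      rw [key n, pow_succ]
      have hden : 0 < 1 + V x n := by linarith [hge n]
      have h1 : (1 - L) / (1 + V x n) ≤ c := by
        rw [hcdef]
        apply div_le_div_of_nonneg_left (by linarith) (by linarith) (by linarith [hge n])
      calc (1 - L) / (1 + V x n) * (V x n - L) ≤ c * (V x n - L) := by
            apply mul_le_mul_of_nonneg_right h1 (by linarith [hge n])
        _ ≤ c * (c ^ n * (1 - L)) := by
            apply mul_le_mul_of_nonneg_left ih hc0
        _ = c ^ n * c * (1 - L) := by ring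
  have htend : Filter.Tendsto (fun n => V x n - L) Filter.atTop (nhds 0) := by
    apply squeeze_zero (fun n => by linarith [hge n]) bound
    have : Filter.Tendsto (fun n : ℕ => c ^ n * (1 - L)) Filter.atTop (nhds (0 * (1 - L))) :=
      (tendsto_pow_atTop_nhds_zero_of_lt_one hc0 hc1).mul_const _
    simpa using this
  have := htend.add_const L
  simpa using this
end

section
/- For every x ∈ (0,1) and n ≥ 0 such that U_n(1/x) ≠ 0, V_n(x²) = x·T_{n+1}(1/x)/U_n(1/x), where T and U are Chebyshev polynomials of the first and second kind. -/
open Polynomial Polynomial.Chebyshev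

lemma Upos (y : ℝ) (hy : 1 ≤ y) : ∀ n : ℕ,
    1 ≤ (U ℝ n).eval y ∧ (U ℝ n).eval y ≤ (U ℝ (n + 1)).eval y := by
  intro n
  induction n with
  | zero => simp [U_zero, U_one]; nlinarith
  | succ m ih =>
    obtain ⟨h1, h2⟩ := ih
    have hadd : (U ℝ ((m : ℤ) + 2)).eval y
        = 2 * y * (U ℝ ((m : ℤ) + 1)).eval y - (U ℝ m).eval y := by
      rw [U_add_two]; simp
    push_cast
    rw [show ((m : ℤ) + 1 + 1) = (m : ℤ) + 2 by ring, hadd]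
    constructor <;> nlinarith

theorem stmt13 (x : ℝ) (hx : x ∈ Set.Ioo (0 : ℝ) 1) (n : ℕ)
    (hU : (Polynomial.Chebyshev.U ℝ n).eval (1 / x) ≠ 0) :
    V (x ^ 2) n =
      x * (Polynomial.Chebyshev.T ℝ (n + 1)).eval (1 / x) /
        (Polynomial.Chebyshev.U ℝ n).eval (1 / x) := by
  obtain ⟨hx0, hx1⟩ := hx
  clear hU
  have hx0' : x ≠ 0 := ne_of_gt hx0
  have hy1 : 1 ≤ 1 / x := by rw [le_div_iff₀ hx0]; linarith
  induction n with
  | zero =>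
    show (1 : ℝ) = x * (T ℝ ((0 : ℕ) + 1)).eval (1 / x) / (U ℝ ((0 : ℕ) : ℤ)).eval (1 / x)
    norm_num [T_one, U_zero]
    field_simp
  | succ m ih =>
    have hb := (Upos (1 / x) hy1 m).1
    have hd := (Upos (1 / x) hy1 (m + 1)).1
    push_cast at hd
    set a := (T ℝ ((m : ℤ) + 1)).eval (1 / x) with ha
    set b := (U ℝ (m : ℤ)).eval (1 / x) with hbdef
    set c := (T ℝ ((m : ℤ) + 2)).eval (1 / x) with hc
    set d := (U ℝ ((m : ℤ) + 1)).eval (1 / x) with hddef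
    have h1 : d = (1 / x) * b + a := by
      rw [hddef, ha, hbdef, U_eq_X_mul_U_add_T]
      simp only [eval_add, eval_mul, eval_X]
    have h2 : c = (1 / x) * a - (1 - (1 / x) ^ 2) * b := by
      rw [hc, ha, hbdef, T_eq_X_mul_T_sub_pol_U]
      simp only [eval_sub, eval_mul, eval_add, eval_one, eval_pow, eval_X]
    have h1' : x * d = b + x * a := by
      rw [h1]; field_simp
    have h2' : x ^ 2 * c = (1 - x ^ 2) * b + x * a := by
      rw [h2]; field_simp; ring
    have hb0 : b ≠ 0 := by linarith
    have hd0 : d ≠ 0 := by linarith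
    have e1 : 1 + x * a / b = x * d / b := by
      field_simp; linarith [h1']
    have e2 : 1 - x ^ 2 + x * a / b = x ^ 2 * c / b := by
      field_simp; linarith [h2']
    have goalcast : V (x ^ 2) (m + 1) = x * c / d := by
      show (1 - x ^ 2 + V (x ^ 2) m) / (1 + V (x ^ 2) m) = x * c / d
      rw [ih, e1, e2]
      rw [div_div_div_eq]
      rw [div_eq_div_iff (by positivity) (by positivity)]
      ring
    rw [goalcast, hc, hddef]
    push_cast
    norm_num [show ((m : ℤ) + 1 + 1) = (m : ℤ) + 2 from by ring]
end

section
/- For every integer n ≥ 2 and every x ∈ (0,1), V_n(x) = 1 - x/2 - (x²/(2(n+1)))·Σ_{k=1}^{⌊n/2⌋} sin²(2πk/(n+1))/(1 - x·cos²(πk/(n+1))). -/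
/-!
Put `x = 1 - s ^ 2` with `0 < s < 1` and `N = n + 1`. The recursion is a Möbius map whose iterates
are `V x n = s * (P + Q) / (P - Q)` with `P = (1 + s) ^ N` and `Q = (1 - s) ^ N`.

The summand is invariant under `k ↦ N - k` and vanishes at `k = 0` and at `2 k = N`, so the sum
over `1 ≤ k ≤ n / 2` is half the sum over all `k < N`. With `θ = 2 π k / N` and `a = 2 / x - 1`,
the summand equals `2 / x * (a + cos θ) - 8 (1 - x) / x ^ 3 / (a - cos θ)`. The cosines sum to
zero, and writing `a = (R + R⁻¹) / 2` with `R = (1 + s) / (1 - s)`, partial fractions turn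
`1 / (a - cos θ)` into terms `c / (c - ζ ^ k)` over the `N`-th roots of unity `ζ ^ k`, whose sum is
`N c ^ N / (c ^ N - 1)` (the logarithmic derivative of `X ^ N - 1`).
-/

open Finset Real

theorem IsPrimitiveRoot.sum_pow_pow_eq {K : Type*} [Field K] {ζ : K} {N : ℕ}
    (hζ : IsPrimitiveRoot ζ N) {i : ℕ} (hi : i < N) :
    ∑ k ∈ range N, (ζ ^ k) ^ i = if i = 0 then (N : K) else 0 := by
  split_ifs with h
  · simp [h]
  · simp_rw [← pow_mul, mul_comm _ i, pow_mul]
    rw [geom_sum_eq (hζ.pow_ne_one_of_pos_of_lt h hi), ← pow_mul, mul_comm, pow_mul,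
      hζ.pow_eq_one, one_pow, sub_self, zero_div]

theorem IsPrimitiveRoot.sum_div_sub_pow {K : Type*} [Field K] {ζ : K} {N : ℕ}
    (hζ : IsPrimitiveRoot ζ N) {c : K} (hc : c ^ N ≠ 1) :
    ∑ k ∈ range N, c / (c - ζ ^ k) = N * c ^ N / (c ^ N - 1) := by
  have hcN : c ^ N - 1 ≠ 0 := sub_ne_zero.mpr hc
  have hterm : ∀ k, c / (c - ζ ^ k) =
      (∑ i ∈ range N, (ζ ^ k) ^ i * c ^ (N - 1 - i)) * c / (c ^ N - 1) := by
    intro k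
    have hy : (ζ ^ k) ^ N = 1 := by rw [← pow_mul, mul_comm, pow_mul, hζ.pow_eq_one, one_pow]
    have hgeom := geom_sum₂_mul (ζ ^ k) c N
    rw [hy] at hgeom
    have hsub : c - ζ ^ k ≠ 0 := fun h => hc (sub_eq_zero.mp h ▸ hy)
    rw [div_eq_div_iff hsub hcN]
    linear_combination c * hgeom
  rcases N.eq_zero_or_pos with rfl | hN
  · simp
  simp_rw [hterm, ← sum_div, ← sum_mul]
  rw [sum_comm]
  simp_rw [← sum_mul]
  rw [sum_eq_single_of_mem 0 (mem_range.mpr hN) fun i hi hi0 => by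
      rw [hζ.sum_pow_pow_eq (mem_range.mp hi), if_neg hi0, zero_mul],
    hζ.sum_pow_pow_eq hN, if_pos rfl, Nat.sub_zero, mul_assoc, ← pow_succ, Nat.sub_add_cancel hN]

theorem one_div_sub_eq_partial_fractions {K : Type*} [Field K] [NeZero (2 : K)] {R w : K}
    (hw : w ≠ 0) (hR : R - R⁻¹ ≠ 0) (hRw : R - w ≠ 0) (hRw' : R⁻¹ - w ≠ 0) :
    1 / ((R + R⁻¹) / 2 - (w + w⁻¹) / 2) = 2 / (R - R⁻¹) * (R / (R - w) - R⁻¹ / (R⁻¹ - w)) := by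
  have hR0 : R ≠ 0 := by rintro rfl; simp at hR
  have hfactor : (R + R⁻¹) / 2 - (w + w⁻¹) / 2 = (R - w) * (R⁻¹ - w) / (-2 * w) := by
    field_simp; ring
  rw [hfactor, div_sub_div _ _ hRw hRw', one_div_div, mul_div_assoc',
    div_left_inj' (mul_ne_zero hRw hRw'),
    show R * (R⁻¹ - w) - (R - w) * R⁻¹ = -w * (R - R⁻¹) by ring,
    mul_comm (-w), ← mul_assoc, div_mul_cancel₀ _ hR]
  ring

theorem Complex.cos_eq_exp_mul_I_add_inv (z : ℂ) :
    Complex.cos z = (Complex.exp (z * Complex.I) + (Complex.exp (z * Complex.I))⁻¹) / 2 := by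
  rw [Complex.cos, ← Complex.exp_neg, neg_mul]

theorem Complex.exp_two_pi_mul_I_div_pow (N k : ℕ) :
    Complex.exp (2 * π * Complex.I / N) ^ k = Complex.exp (2 * π * k / N * Complex.I) := by
  rw [← Complex.exp_nat_mul]; ring_nf

theorem sum_range_cos_two_pi_mul_div {N : ℕ} (hN : 1 < N) :
    ∑ k ∈ range N, cos (2 * π * k / N) = 0 := by
  have hζ := Complex.isPrimitiveRoot_exp N (by omega)
  have hre := congrArg Complex.re (hζ.geom_sum_eq_zero hN)
  simp only [Complex.exp_two_pi_mul_I_div_pow, Complex.re_sum, Complex.zero_re] at hre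
  convert hre using 2 with k
  rw [← Complex.exp_ofReal_mul_I_re]
  norm_cast

theorem sum_range_one_div_sub_cos {R : ℝ} (hR : 1 < R) (N : ℕ) :
    ∑ k ∈ range N, 1 / ((R + R⁻¹) / 2 - cos (2 * π * k / N)) =
      2 * N / (R - R⁻¹) * ((R ^ N + 1) / (R ^ N - 1)) := by
  rcases N.eq_zero_or_pos with rfl | hN
  · simp
  have hζ := Complex.isPrimitiveRoot_exp N hN.ne'
  set ζ := Complex.exp (2 * π * Complex.I / N)
  have hR0 : (R : ℂ) ≠ 0 := by exact_mod_cast (by linarith : R ≠ 0)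
  have hRN : (R : ℂ) ^ N ≠ 1 := by exact_mod_cast (one_lt_pow₀ hR hN.ne').ne'
  have hRN' : (R : ℂ)⁻¹ ^ N ≠ 1 := by rw [inv_pow]; exact inv_ne_one.mpr hRN
  have hRR : (R : ℂ) - (R : ℂ)⁻¹ ≠ 0 := by
    exact_mod_cast (sub_pos.mpr ((inv_lt_one₀ (by linarith)).mpr hR |>.trans hR)).ne'
  have hpow : ∀ k, (ζ ^ k) ^ N = 1 := fun k => by
    rw [← pow_mul, mul_comm, pow_mul, hζ.pow_eq_one, one_pow]
  have hterm : ∀ k ∈ range N, ((1 / ((R + R⁻¹) / 2 - cos (2 * π * k / N)) : ℝ) : ℂ) =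
      2 / (R - R⁻¹) * (R / (R - ζ ^ k) - (R : ℂ)⁻¹ / ((R : ℂ)⁻¹ - ζ ^ k)) := by
    intro k _
    push_cast
    rw [Complex.cos_eq_exp_mul_I_add_inv, ← Complex.exp_two_pi_mul_I_div_pow]
    exact one_div_sub_eq_partial_fractions (pow_ne_zero _ (hζ.ne_zero hN.ne')) hRR
      (fun h => hRN (sub_eq_zero.mp h ▸ hpow k)) (fun h => hRN' (sub_eq_zero.mp h ▸ hpow k))
  apply Complex.ofReal_injective
  rw [Complex.ofReal_sum, sum_congr rfl hterm, ← mul_sum, sum_sub_distrib,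
    hζ.sum_div_sub_pow hRN, hζ.sum_div_sub_pow hRN']
  have : (R : ℂ) ^ N - 1 ≠ 0 := sub_ne_zero.mpr hRN
  push_cast
  rw [inv_pow]
  field_simp
  ring

theorem one_sub_pow_lt_one_add_pow {s : ℝ} (hs : 0 < s) {j : ℕ} (hj : j ≠ 0) :
    (1 - s) ^ j < (1 + s) ^ j :=
  calc (1 - s) ^ j ≤ |1 - s| ^ j := by rw [← abs_pow]; exact le_abs_self _
    _ < (1 + s) ^ j := pow_lt_pow_left₀ (abs_lt.mpr ⟨by linarith, by linarith⟩) (abs_nonneg _) hj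

theorem sum_range_one_div_sub_cos_one_sub_sq {s : ℝ} (hs0 : 0 < s) (hs1 : s < 1) (N : ℕ) :
    ∑ k ∈ range N, 1 / (2 / (1 - s ^ 2) - 1 - cos (2 * π * k / N)) =
      N * (1 - s ^ 2) / (2 * s) * (((1 + s) ^ N + (1 - s) ^ N) / ((1 + s) ^ N - (1 - s) ^ N)) := by
  rcases N.eq_zero_or_pos with rfl | hN
  · simp
  have hR : 1 < (1 + s) / (1 - s) := by rw [one_lt_div (by linarith)]; linarith
  have h1 : 1 - s ≠ 0 := by linarith
  have h2 : 1 + s ≠ 0 := by linarith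
  have h3 : 1 - s ^ 2 ≠ 0 := by nlinarith
  have ha : 2 / (1 - s ^ 2) - 1 = ((1 + s) / (1 - s) + ((1 + s) / (1 - s))⁻¹) / 2 := by
    field_simp; ring
  have hRR : (1 + s) / (1 - s) - ((1 + s) / (1 - s))⁻¹ = 4 * s / (1 - s ^ 2) := by
    field_simp; ring
  have hPQ := sub_ne_zero.mpr (one_sub_pow_lt_one_add_pow hs0 hN.ne').ne'
  have hQ : (1 - s) ^ N ≠ 0 := pow_ne_zero _ h1
  rw [ha, sum_range_one_div_sub_cos hR, hRR, div_pow]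
  generalize (1 + s) ^ N = P at hPQ ⊢
  generalize (1 - s) ^ N = Q at hPQ hQ ⊢
  field_simp [hs0.ne']
  ring

theorem sin_sq_div_one_sub_mul_cos_sq_half {x : ℝ} (hx : x ≠ 0) {θ : ℝ}
    (hθ : 1 - x * cos (θ / 2) ^ 2 ≠ 0) :
    sin θ ^ 2 / (1 - x * cos (θ / 2) ^ 2) =
      2 / x * (2 / x - 1 + cos θ) - 8 * (1 - x) / x ^ 3 * (1 / (2 / x - 1 - cos θ)) := by
  have hcos : cos θ = 2 * cos (θ / 2) ^ 2 - 1 := by rw [← cos_two_mul]; ring_nf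
  have hden : 2 / x - 1 - cos θ = 2 * (1 - x * cos (θ / 2) ^ 2) / x := by
    rw [hcos]; field_simp; ring
  rw [hden, sin_sq, hcos]
  generalize cos (θ / 2) = c at hθ ⊢
  have : 1 - c ^ 2 * x ≠ 0 := by rwa [mul_comm]
  field_simp
  ring

theorem sum_range_sin_sq_div_one_sub_mul_cos_sq {s : ℝ} (hs0 : 0 < s) (hs1 : s < 1) {N : ℕ}
    (hN : 1 < N) :
    ∑ k ∈ range N, sin (2 * π * k / N) ^ 2 / (1 - (1 - s ^ 2) * cos (π * k / N) ^ 2) =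
      2 * N / (1 - s ^ 2) ^ 2 *
        (1 + s ^ 2 - 2 * s * (((1 + s) ^ N + (1 - s) ^ N) / ((1 + s) ^ N - (1 - s) ^ N))) := by
  have hx : 1 - s ^ 2 ≠ 0 := by nlinarith
  have hterm : ∀ k ∈ range N,
      sin (2 * π * k / N) ^ 2 / (1 - (1 - s ^ 2) * cos (π * k / N) ^ 2) =
        2 / (1 - s ^ 2) * (2 / (1 - s ^ 2) - 1 + cos (2 * π * k / N)) -
          8 * (1 - (1 - s ^ 2)) / (1 - s ^ 2) ^ 3 *
            (1 / (2 / (1 - s ^ 2) - 1 - cos (2 * π * k / N))) := by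
    intro k _
    rw [show π * k / N = 2 * π * k / N / 2 by ring]
    refine sin_sq_div_one_sub_mul_cos_sq_half hx (ne_of_gt ?_)
    nlinarith [mul_nonneg (by nlinarith : 0 ≤ 1 - s ^ 2)
      (sub_nonneg.mpr (cos_sq_le_one (2 * π * k / N / 2)))]
  rw [sum_congr rfl hterm, sum_sub_distrib, ← mul_sum, ← mul_sum, sum_add_distrib, sum_const,
    card_range, nsmul_eq_mul, sum_range_cos_two_pi_mul_div hN, add_zero,
    sum_range_one_div_sub_cos_one_sub_sq hs0 hs1]
  generalize ((1 + s) ^ N + (1 - s) ^ N) / ((1 + s) ^ N - (1 - s) ^ N) = T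
  field_simp [hs0.ne']
  ring

theorem sum_range_succ_eq_two_nsmul_sum_Icc_of_symm {M : Type*} [AddCommMonoid M] (n : ℕ)
    {f : ℕ → M} (h0 : f 0 = 0) (hfix : ∀ k, 2 * k = n + 1 → f k = 0)
    (hsymm : ∀ k ≤ n + 1, f (n + 1 - k) = f k) :
    ∑ k ∈ range (n + 1), f k = 2 • ∑ k ∈ Icc 1 (n / 2), f k := by
  set m := n / 2
  have hlow : ∑ k ∈ range (m + 1), f k = ∑ k ∈ Icc 1 m, f k := by
    rw [range_eq_Ico, sum_eq_sum_Ico_succ_bot (by omega), h0, zero_add]; rfl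
  have hrefl : ∑ k ∈ Ico (m + 1) (n + 1), f k = ∑ k ∈ Icc 1 (n - m), f k := by
    refine sum_nbij' (fun k => n + 1 - k) (fun k => n + 1 - k) ?_ ?_ ?_ ?_ ?_ <;>
      simp only [mem_Ico, mem_Icc]
    · intro k hk; omega
    · intro k hk; omega
    · intro k hk; omega
    · intro k hk; omega
    · intro k hk; exact (hsymm k (by omega)).symm
  have hmid : ∑ k ∈ Icc 1 (n - m), f k = ∑ k ∈ Icc 1 m, f k := by
    refine (sum_subset (Icc_subset_Icc_right (by omega)) fun k hk hk' => hfix k ?_).symm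
    simp only [mem_Icc] at hk hk'
    omega
  rw [← sum_range_add_sum_Ico _ (by omega : m + 1 ≤ n + 1), hlow, hrefl, hmid, two_nsmul]

theorem sum_Icc_sin_sq_div_eq_half_sum_range (n : ℕ) (x : ℝ) :
    ∑ k ∈ Icc 1 (n / 2), sin (2 * π * k / (n + 1)) ^ 2 / (1 - x * cos (π * k / (n + 1)) ^ 2) =
      (∑ k ∈ range (n + 1),
        sin (2 * π * k / (n + 1)) ^ 2 / (1 - x * cos (π * k / (n + 1)) ^ 2)) / 2 := by
  have hn : (n : ℝ) + 1 ≠ 0 := by positivity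
  rw [sum_range_succ_eq_two_nsmul_sum_Icc_of_symm n (by simp) ?_ ?_, nsmul_eq_mul, Nat.cast_ofNat,
    mul_div_cancel_left₀ _ two_ne_zero]
  · intro k hk
    have hπ : 2 * π * k / (n + 1) = π := by
      rw [div_eq_iff hn]; norm_cast; rw [← hk]; push_cast; ring
    simp [hπ]
  · intro k hk
    have h2 : 2 * π * ((n + 1 - k : ℕ) : ℝ) / (n + 1) = 2 * π - 2 * π * k / (n + 1) := by
      rw [Nat.cast_sub hk]; field_simp; push_cast; ring
    have h1 : π * ((n + 1 - k : ℕ) : ℝ) / (n + 1) = π - π * k / (n + 1) := by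
      rw [Nat.cast_sub hk]; field_simp; push_cast; ring
    rw [h1, h2, sin_two_pi_sub, cos_pi_sub, neg_sq, neg_sq]

theorem V_one_sub_sq {s : ℝ} (hs : 0 < s) (n : ℕ) :
    V (1 - s ^ 2) n = s * (((1 + s) ^ (n + 1) + (1 - s) ^ (n + 1)) /
      ((1 + s) ^ (n + 1) - (1 - s) ^ (n + 1))) := by
  induction n with
  | zero => simp only [V, zero_add, pow_one]; field_simp [hs.ne']; ring
  | succ n ih =>
    have hp := sub_pos.mpr (one_sub_pow_lt_one_add_pow hs n.succ_ne_zero)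
    have hp' := sub_pos.mpr (one_sub_pow_lt_one_add_pow hs (n + 1).succ_ne_zero)
    rw [V, ih]
    set p := (1 + s) ^ (n + 1)
    set q := (1 - s) ^ (n + 1)
    have h1V : 1 + s * ((p + q) / (p - q)) = (p * (1 + s) - q * (1 - s)) / (p - q) := by
      field_simp; ring
    rw [pow_succ, pow_succ] at hp' ⊢
    rw [h1V]
    field_simp
    ring

theorem stmt15 (n : ℕ) (hn : 2 ≤ n) (x : ℝ) (hx : x ∈ Set.Ioo (0 : ℝ) 1) :
    V x n = 1 - x / 2 -
      x ^ 2 / (2 * (n + 1)) *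
        ∑ k ∈ Finset.Icc 1 (n / 2),
          Real.sin (2 * Real.pi * k / (n + 1)) ^ 2 /
            (1 - x * Real.cos (Real.pi * k / (n + 1)) ^ 2) := by
  obtain ⟨s, hs0, hs1, rfl⟩ : ∃ s, 0 < s ∧ s < 1 ∧ x = 1 - s ^ 2 := by
    refine ⟨√(1 - x), sqrt_pos.mpr (by linarith [hx.2]), ?_, ?_⟩
    · rw [sqrt_lt' one_pos]; linarith [hx.1]
    · rw [sq_sqrt (by linarith [hx.2])]; ring
  have hsum := sum_range_sin_sq_div_one_sub_mul_cos_sq hs0 hs1 (N := n + 1) (by omega)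
  push_cast at hsum
  rw [V_one_sub_sq hs0, sum_Icc_sin_sq_div_eq_half_sum_range, hsum]
  have hs : 1 - s ^ 2 ≠ 0 := by nlinarith
  generalize ((1 + s) ^ (n + 1) + (1 - s) ^ (n + 1)) / ((1 + s) ^ (n + 1) - (1 - s) ^ (n + 1)) = T
  field_simp
  ring
end

section
/- For every n ≥ 1, Σ_{m=n+1}^{∞} (-A_m^{(n)}) = 2^{-2n}·C(2n,n) - 1/(n+1), where A_m^{(n)} are the Taylor coefficients of V_n at 0. -/
/-!
`y = √(1 - x)` is the fixed point of the recursion, and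
`V x (n + 1) - y = (1 - y) (V x n - y) / (1 + V x n)` with `|1 - y| ≤ |x|`, so
`|V x n - √(1 - x)| ≤ |x| ^ (n + 1)` for `x ≤ 1`. By uniqueness of Taylor coefficients, the
coefficients `A m` with `m ≤ n` are those of the binomial series of `(1 - x) ^ (1 / 2)`, namely
`Ring.choose (m - 3/2) m`. By Pascal's rule their sum up to `n` is `Ring.choose (n - 1/2) n`,
which is `C(2n, n) / 4 ^ n`. Evaluating the power series at `x = 1`, where `V 1 n = 1 / (n + 1)`,
gives the sum of the tail.
-/

open Asymptotics Topology Finset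

theorem HasFPowerSeriesAt.apply_eq_zero_of_isBigO {𝕜 E F : Type*} [NontriviallyNormedField 𝕜]
    [NormedAddCommGroup E] [NormedSpace 𝕜 E] [NormedAddCommGroup F] [NormedSpace 𝕜 F]
    {f : E → F} {p : FormalMultilinearSeries 𝕜 E F} {x : E} {n : ℕ}
    (hp : HasFPowerSeriesAt f p x) (hf : (fun y => f (x + y)) =O[𝓝 0] fun y => ‖y‖ ^ (n + 1))
    {k : ℕ} (hk : k ≤ n) (y : E) : p k (fun _ => y) = 0 := by
  induction k using Nat.strong_induction_on generalizing y with
  | _ k ih =>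
  have hsum : p.partialSum (k + 1) = fun y => p k fun _ => y := by
    funext z
    refine sum_eq_single _ (fun j hj hjk => ?_) (fun h => absurd (self_mem_range_succ k) h)
    have hjk : j < k := lt_of_le_of_ne (mem_range_succ_iff.1 hj) hjk
    exact ih j hjk (by omega) z
  have hpow : (fun y : E => ‖y‖ ^ (n + 1)) =O[𝓝 0] fun y => ‖y‖ ^ (k + 1) := by
    refine IsBigO.of_bound' ?_
    filter_upwards [Metric.ball_mem_nhds (0 : E) one_pos] with z hz
    rw [mem_ball_zero_iff] at hz
    simpa using pow_le_pow_of_le_one (norm_nonneg z) hz.le (by omega : k + 1 ≤ n + 1)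
  have := (hf.trans hpow).sub (hp.isBigO_sub_partialSum_pow (k + 1))
  simp only [hsum, sub_sub_cancel] at this
  exact this.continuousMultilinearMap_apply_eq_zero y

theorem hasFPowerSeriesOnBall_ofScalars_of_hasSum {c : ℕ → ℝ} {f : ℝ → ℝ} {r : NNReal} (hr : 0 < r)
    (h : ∀ x : ℝ, |x| < r → HasSum (fun m => c m * x ^ m) (f x)) :
    HasFPowerSeriesOnBall f (FormalMultilinearSeries.ofScalars ℝ c) 0 r where
  r_le := by
    refine ENNReal.le_of_forall_nnreal_lt fun t ht => ?_
    refine FormalMultilinearSeries.le_radius_of_tendsto _ (l := 0) ?_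
    simpa using (h t (by simpa using ht)).summable.tendsto_atTop_zero.norm
  r_pos := by simpa using hr
  hasSum := by
    intro y hy
    simpa [FormalMultilinearSeries.ofScalars_apply_eq, mul_comm] using h y (by simpa using hy)

theorem Ring.sum_range_choose_add {R : Type*} [Ring R] [BinomialRing R] (r : R) (n : ℕ) :
    ∑ m ∈ range (n + 1), choose (r + m) m = choose (r + n + 1) n := by
  induction n with
  | zero => simp
  | succ n ih =>
    rw [sum_range_succ, ih, Nat.cast_succ, ← add_assoc, choose_succ_succ (r + n + 1)]

theorem Ring.succ_mul_choose_succ {R : Type*} [Ring R] [BinomialRing R] (r : R) (k : ℕ) :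
    (k + 1 : R) * choose (r + 1) (k + 1) = (r + 1) * choose r k := by
  simpa [choose_one_right, nsmul_eq_mul] using choose_smul_choose (r + 1) (Nat.le_add_left 1 k)

theorem choose_neg_half_add_eq_centralBinom_div (n : ℕ) :
    Ring.choose (-1 / 2 + n : ℝ) n = n.centralBinom / 4 ^ n := by
  induction n with
  | zero => simp
  | succ n ih =>
    have hrec := Ring.succ_mul_choose_succ (-1 / 2 + n : ℝ) n
    have hcb : ((n + 1 : ℕ) : ℝ) * (n + 1).centralBinom = 2 * (2 * n + 1) * n.centralBinom := by
      exact_mod_cast Nat.succ_mul_centralBinom_succ n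
    rw [ih] at hrec
    push_cast at hrec hcb ⊢
    apply mul_left_cancel₀ (by positivity : (n + 1 : ℝ) ≠ 0)
    rw [show (-1 / 2 + (n + 1) : ℝ) = -1 / 2 + n + 1 by ring, hrec, pow_succ]
    field_simp
    linear_combination -2 * hcb

theorem Real.sqrt_one_sub_hasFPowerSeriesOnBall_zero :
    HasFPowerSeriesOnBall (fun x => √(1 - x))
      (.ofScalars ℝ fun m => Ring.choose (-3 / 2 + m : ℝ) m) 0 1 := by
  convert (Real.one_div_one_sub_rpow_hasFPowerSeriesOnBall_zero (-1 / 2)).congr ?_ using 3 with m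
  · ring_nf
  · intro x hx
    have hx1 : |x| < 1 := by simpa [enorm_eq_nnnorm] using! hx
    have h1x : 0 ≤ 1 - x := by linarith [le_abs_self x]
    dsimp only
    rw [Real.sqrt_eq_rpow, one_div, neg_div, Real.rpow_neg h1x, inv_inv]

theorem V_one (n : ℕ) : V 1 n = 1 / (n + 1) := by
  induction n with
  | zero => simp [V]
  | succ n ih =>
    rw [V, ih]
    push_cast
    field_simp
    ring

theorem V_nonneg {x : ℝ} (hx : x ≤ 1) (n : ℕ) : 0 ≤ V x n := by
  induction n with
  | zero => simp [V]
  | succ n ih => exact div_nonneg (by linarith) (by linarith)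

theorem abs_V_sub_sqrt_le {x : ℝ} (hx : x ≤ 1) (n : ℕ) :
    |V x n - √(1 - x)| ≤ |x| ^ (n + 1) := by
  set y := √(1 - x)
  have hy : y ^ 2 = 1 - x := Real.sq_sqrt (by linarith)
  have hy0 : 0 ≤ y := Real.sqrt_nonneg _
  have h1y : |1 - y| ≤ |x| := by
    have hprod : x = (1 - y) * (1 + y) := by linear_combination hy
    rw [hprod, abs_mul, abs_of_nonneg (by linarith : 0 ≤ 1 + y)]
    exact le_mul_of_one_le_right (abs_nonneg _) (by linarith)
  induction n with
  | zero => simpa [V] using h1y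
  | succ n ih =>
    have hV := V_nonneg hx n
    have hstep : V x (n + 1) - y = (1 - y) * (V x n - y) / (1 + V x n) := by
      rw [V]
      field_simp
      linear_combination -hy
    calc |V x (n + 1) - y| = |1 - y| * |V x n - y| / (1 + V x n) := by
          rw [hstep, abs_div, abs_mul, abs_of_nonneg (by linarith : 0 ≤ 1 + V x n)]
      _ ≤ |x| * |x| ^ (n + 1) / 1 := by gcongr; linarith
      _ = |x| ^ (n + 2) := by rw [div_one, pow_succ' _ (n + 1)]

theorem V_sub_sqrt_isBigO (n : ℕ) :
    (fun x => V (0 + x) n - √(1 - (0 + x))) =O[𝓝 0] fun x => ‖x‖ ^ (n + 1) := by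
  refine IsBigO.of_bound 1 ?_
  filter_upwards [Iio_mem_nhds one_pos] with x hx
  simpa using abs_V_sub_sqrt_le (le_of_lt hx) n

theorem eq_choose_of_hasSum_V {n : ℕ} {A : ℕ → ℝ}
    (hA : ∀ x : ℝ, |x| < 1 → HasSum (fun m => A m * x ^ m) (V x n)) {m : ℕ} (hm : m ≤ n) :
    A m = Ring.choose (-3 / 2 + m : ℝ) m := by
  have hV := hasFPowerSeriesOnBall_ofScalars_of_hasSum one_pos (by simpa using hA)
  have hD := hV.hasFPowerSeriesAt.sub Real.sqrt_one_sub_hasFPowerSeriesOnBall_zero.hasFPowerSeriesAt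
  rw [← FormalMultilinearSeries.ofScalars_sub] at hD
  simpa [FormalMultilinearSeries.ofScalars_apply_eq, sub_eq_zero] using
    hD.apply_eq_zero_of_isBigO (V_sub_sqrt_isBigO n) hm 1

theorem stmt17_general (n : ℕ) (A : ℕ → ℝ)
    (hA : ∀ x : ℝ, |x| ≤ 1 → HasSum (fun m => A m * x ^ m) (V x n)) :
    HasSum (fun m => -A (m + (n + 1)))
      ((Nat.choose (2 * n) n : ℝ) / 2 ^ (2 * n) - 1 / (n + 1)) := by
  have hcoeff : ∀ m ∈ range (n + 1), A m = Ring.choose (-3 / 2 + m : ℝ) m := fun m hm =>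
    eq_choose_of_hasSum_V (fun x hx => hA x hx.le) (mem_range_succ_iff.1 hm)
  have hhead : ∑ m ∈ range (n + 1), A m = n.centralBinom / 4 ^ n := by
    rw [sum_congr rfl hcoeff, Ring.sum_range_choose_add, ← choose_neg_half_add_eq_centralBinom_div]
    ring_nf
  have htail := (hasSum_nat_add_iff' (n + 1)).2 (by simpa using hA 1 (by norm_num))
  rw [V_one, hhead] at htail
  rw [← Nat.centralBinom_eq_two_mul_choose, pow_mul, ← neg_sub]
  exact mod_cast htail.neg

theorem stmt17 (n : ℕ) (hn : 1 ≤ n) (A : ℕ → ℝ)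
    (hA : ∀ x : ℝ, |x| ≤ 1 → HasSum (fun m => A m * x ^ m) (V x n)) :
    HasSum (fun m => -A (m + (n + 1)))
      ((Nat.choose (2 * n) n : ℝ) / 2 ^ (2 * n) - 1 / (n + 1)) :=
  stmt17_general n A hA
end
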